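/- arXiv:1706.10032 — 5 statements merged into one kernel-verified Lean document; each statement's English description precedes it below -/
import Mathlib

section
/- Let r be a positive real number such that 1, r, r², r³ are linearly independent over ℚ. Let Λ ⊂ ℂ² be the additive subgroup generated by the four vectors (1,0), (0,1), (i·r³, r), (r, i). Then for every complex line L = ℂ·v (v ∈ ℂ², v ≠ 0), the intersection L ∩ Λ is a cyclic group: there exists λ₀ ∈ L ∩ Λ with L ∩ Λ = ℤ·λ₀. -/
/-!
A point of Λ with integer coefficients `a` is `(a₀ + a₃r + a₂r³i, a₁ + a₂r + a₃i)`. Two such points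
are `ℂ`-collinear iff their `2 × 2` determinant vanishes; splitting it into real and imaginary
parts and using the `ℚ`-independence of `1, r, r², r³` makes all `2 × 2` minors of the two
coefficient vectors vanish, so these vectors are proportional. Hence, for any nonzero `x₀ ∈ L ∩ Λ`,
a fixed nonzero integer multiple of `L ∩ Λ` lies in `ℤ x₀`; a torsion-free group embedding into a
cyclic group is cyclic.
-/

open Complex

theorem AddSubgroup.isAddCyclic_of_forall_zsmul_mem_zmultiples {M : Type*} [AddCommGroup M]
    [IsAddTorsionFree M] {H : AddSubgroup M} {t : ℤ} (ht : t ≠ 0) {x : M}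
    (h : ∀ y ∈ H, t • y ∈ AddSubgroup.zmultiples x) : IsAddCyclic H :=
  isAddCyclic_of_injective (((zsmulAddGroupHom t).comp H.subtype).codRestrict _ fun y => h y y.2)
    fun _ _ hyz => Subtype.ext <| zsmul_right_injective ht <| congrArg Subtype.val hyz

theorem mul_eq_mul_of_mem_span_singleton {x y v : ℂ × ℂ} (hx : x ∈ ℂ ∙ v)
    (hy : y ∈ ℂ ∙ v) : y.1 * x.2 = y.2 * x.1 := by
  obtain ⟨a, rfl⟩ := Submodule.mem_span_singleton.mp hx
  obtain ⟨b, rfl⟩ := Submodule.mem_span_singleton.mp hy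
  simp only [Prod.smul_fst, Prod.smul_snd, smul_eq_mul]
  ring

/-- The Plücker relation `m₀₁m₂₃ - m₀₂m₁₃ + m₀₃m₁₂ = 0` turns `m₀₂ = m₁₃` into `m₀₂² = 0`. -/
theorem minors_eq_zero_of_plucker {R : Type*} [CommRing R] [NoZeroDivisors R] (a b : Fin 4 → R)
    (h01 : a 0 * b 1 = a 1 * b 0) (h03 : a 0 * b 3 = a 3 * b 0) (h12 : a 1 * b 2 = a 2 * b 1)
    (h23 : a 2 * b 3 = a 3 * b 2) (h : a 0 * b 2 - a 2 * b 0 = a 1 * b 3 - a 3 * b 1) :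
    ∀ i j, a i * b j = a j * b i := by
  have h02 : a 0 * b 2 - a 2 * b 0 = 0 := by
    apply pow_eq_zero_iff two_ne_zero |>.mp
    linear_combination (a 0 * b 2 - a 2 * b 0) * h + (a 2 * b 3 - a 3 * b 2) * h01 +
      (a 1 * b 2 - a 2 * b 1) * h03
  have h13 : a 1 * b 3 - a 3 * b 1 = 0 := h ▸ h02
  intro i j
  fin_cases i <;> fin_cases j <;> grind

def latticeGenerators (r : ℝ) : Fin 4 → ℂ × ℂ := ![(1, 0), (0, 1), (I * r ^ 3, r), (r, I)]

theorem sum_smul_latticeGenerators (r : ℝ) (a : Fin 4 → ℤ) :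
    ∑ i, a i • latticeGenerators r i =
      (a 0 + a 3 * r + a 2 * r ^ 3 * I, a 1 + a 2 * r + a 3 * I) := by
  simp only [latticeGenerators, zsmul_eq_mul, Fin.sum_univ_four, Fin.isValue,
    Matrix.cons_val_zero, Matrix.cons_val_one, Matrix.cons_val, Prod.ext_iff, Prod.fst_add,
    Prod.fst_mul, Prod.fst_intCast, mul_one, mul_zero, add_zero, Prod.snd_add, Prod.snd_mul,
    Prod.snd_intCast, zero_add, and_true]
  ring

theorem minors_eq_zero_of_collinear {r : ℝ}
    (hind : ∀ q0 q1 q2 q3 : ℚ,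
      (q0 : ℝ) + q1 * r + q2 * r ^ 2 + q3 * r ^ 3 = 0 →
      q0 = 0 ∧ q1 = 0 ∧ q2 = 0 ∧ q3 = 0)
    {a b : Fin 4 → ℤ} {x y : ℂ × ℂ} (hx : x = ∑ i, a i • latticeGenerators r i)
    (hy : y = ∑ i, b i • latticeGenerators r i) (h : y.1 * x.2 = y.2 * x.1) :
    ∀ i j, a i * b j = a j * b i := by
  rw [hx, hy, sum_smul_latticeGenerators, sum_smul_latticeGenerators] at h
  have hre := congrArg Complex.re h
  have him := congrArg Complex.im h
  simp only [Fin.isValue, ← ofReal_pow, mul_re, add_re, intCast_re, ofReal_re, intCast_im,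
    ofReal_im, mul_zero, sub_zero, I_re, mul_im, zero_mul, add_zero, I_im, mul_one, sub_self,
    add_im, zero_add] at hre him
  obtain ⟨h01, h_lin, h23, -⟩ := hind (a 1 * b 0 - a 0 * b 1 : ℤ)
    (a 2 * b 0 + a 1 * b 3 - a 3 * b 1 - a 0 * b 2 : ℤ) (a 2 * b 3 - a 3 * b 2 : ℤ)
    (a 2 * b 3 - a 3 * b 2 : ℤ) (by push_cast; linear_combination hre)
  obtain ⟨h03, -, -, h12⟩ := hind (a 3 * b 0 - a 0 * b 3 : ℤ) 0 0 (a 1 * b 2 - a 2 * b 1 : ℤ)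
    (by push_cast; linear_combination him)
  norm_cast at h01 h_lin h23 h03 h12
  exact minors_eq_zero_of_plucker a b (by linarith) (by linarith) (by linarith) (by linarith)
    (by linarith)

theorem exists_zsmul_mem_zmultiples_of_collinear {r : ℝ}
    (hind : ∀ q0 q1 q2 q3 : ℚ,
      (q0 : ℝ) + q1 * r + q2 * r ^ 2 + q3 * r ^ 3 = 0 →
      q0 = 0 ∧ q1 = 0 ∧ q2 = 0 ∧ q3 = 0)
    {x : ℂ × ℂ} (hx : x ∈ AddSubgroup.closure (Set.range (latticeGenerators r))) (hx0 : x ≠ 0) :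
    ∃ t : ℤ, t ≠ 0 ∧ ∀ y ∈ AddSubgroup.closure (Set.range (latticeGenerators r)),
      y.1 * x.2 = y.2 * x.1 → t • y ∈ AddSubgroup.zmultiples x := by
  obtain ⟨a, rfl⟩ := AddSubgroup.mem_closure_range_iff_of_fintype.mp hx
  obtain ⟨k, hk⟩ : ∃ k, a k ≠ 0 := by
    by_contra! ha
    exact hx0 (by simp [ha])
  refine ⟨a k, hk, fun y hy hxy => ?_⟩
  obtain ⟨b, rfl⟩ := AddSubgroup.mem_closure_range_iff_of_fintype.mp hy
  have hab := minors_eq_zero_of_collinear hind rfl rfl hxy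
  refine AddSubgroup.mem_zmultiples_iff.mpr ⟨b k, ?_⟩
  simp only [Finset.smul_sum, smul_smul]
  exact Finset.sum_congr rfl fun i _ => by rw [hab k i, mul_comm]

theorem stmt_4_general (r : ℝ)
    (hind : ∀ q0 q1 q2 q3 : ℚ,
      (q0 : ℝ) + q1 * r + q2 * r ^ 2 + q3 * r ^ 3 = 0 →
      q0 = 0 ∧ q1 = 0 ∧ q2 = 0 ∧ q3 = 0)
    (Λ : AddSubgroup (ℂ × ℂ))
    (hΛ : Λ = AddSubgroup.closure
      {((1 : ℂ), (0 : ℂ)), ((0 : ℂ), (1 : ℂ)),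
       ((I * (r : ℂ) ^ 3, (r : ℂ))), (((r : ℂ), I))})
    (v : ℂ × ℂ) :
    ∃ lam0 : ℂ × ℂ, lam0 ∈ Λ ∧ (∃ ζ : ℂ, lam0 = ζ • v) ∧
      {x : ℂ × ℂ | x ∈ Λ ∧ ∃ ζ : ℂ, x = ζ • v} =
        Set.range (fun n : ℤ => n • lam0) := by
  replace hΛ : Λ = AddSubgroup.closure (Set.range (latticeGenerators r)) := by
    simp only [hΛ, latticeGenerators, Matrix.range_cons, Matrix.range_empty, Set.union_empty,
      Set.singleton_union]
  set H := Λ ⊓ (ℂ ∙ v).toAddSubgroup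
  have hH : IsAddCyclic H := by
    obtain hbot | ⟨x, hxH, hx0⟩ := H.bot_or_exists_ne_zero
    · rw [hbot]; infer_instance
    obtain ⟨t, ht, hdiv⟩ := exists_zsmul_mem_zmultiples_of_collinear hind (hΛ ▸ hxH.1) hx0
    exact AddSubgroup.isAddCyclic_of_forall_zsmul_mem_zmultiples ht fun y hy =>
      hdiv y (hΛ ▸ hy.1) (mul_eq_mul_of_mem_span_singleton hxH.2 hy.2)
  obtain ⟨g, hg⟩ := (AddSubgroup.isAddCyclic_iff_exists_zmultiples_eq_top H).mp hH
  have hgH : g ∈ H := hg ▸ AddSubgroup.mem_zmultiples g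
  obtain ⟨ζ, hζ⟩ := Submodule.mem_span_singleton.mp hgH.2
  refine ⟨g, hgH.1, ⟨ζ, hζ.symm⟩, ?_⟩
  calc {x : ℂ × ℂ | x ∈ Λ ∧ ∃ ζ : ℂ, x = ζ • v} = H := by
        ext x; simp [H, Submodule.mem_span_singleton, eq_comm]
    _ = Set.range (fun n : ℤ => n • g) := by rw [← hg, AddSubgroup.coe_zmultiples]

theorem stmt_4 (r : ℝ) (hr : 0 < r)
    (hind : ∀ q0 q1 q2 q3 : ℚ,
      (q0 : ℝ) + q1 * r + q2 * r ^ 2 + q3 * r ^ 3 = 0 →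
      q0 = 0 ∧ q1 = 0 ∧ q2 = 0 ∧ q3 = 0)
    (Λ : AddSubgroup (ℂ × ℂ))
    (hΛ : Λ = AddSubgroup.closure
      {((1 : ℂ), (0 : ℂ)), ((0 : ℂ), (1 : ℂ)),
       ((I * (r : ℂ) ^ 3, (r : ℂ))), (((r : ℂ), I))})
    (v : ℂ × ℂ) (hv : v ≠ 0) :
    ∃ lam0 : ℂ × ℂ, lam0 ∈ Λ ∧ (∃ ζ : ℂ, lam0 = ζ • v) ∧
      {x : ℂ × ℂ | x ∈ Λ ∧ ∃ ζ : ℂ, x = ζ • v} =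
        Set.range (fun n : ℤ => n • lam0) :=
  stmt_4_general r hind Λ hΛ v
end

section
/- Let r be a positive real number such that 1, r, r², r³ are linearly independent over ℚ. Let Λ ⊂ ℂ² be the additive subgroup generated by (1,0), (0,1), (i·r³, r), (r, i). Then there is no 1-dimensional complex subspace L of ℂ² such that L ∩ Λ has rank 2 as an abelian group (equivalently, no complex line L of ℂ² yields a 1-dimensional complex subtorus L/(L∩Λ) of ℂ²/Λ). -/
open Complex

/-!
Write the lattice points as images `L x`, `L y` of integer vectors `x, y ∈ ℤ⁴`. Two of them lie
on a complex line iff their cross product `L x × L y` vanishes. Its real and imaginary parts are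
polynomials of degree at most three in `r` whose coefficients are the `2 × 2` minors `pᵢⱼ` of
`(x, y)`, so the `ℚ`-independence of `1, r, r², r³` forces
`p₀₁ = p₀₃ = p₁₂ = p₂₃ = 0` and `p₀₂ = p₁₃`. The Plücker relation
`p₀₁ p₂₃ - p₀₂ p₁₃ + p₀₃ p₁₂ = 0` then gives `p₀₂² = 0`, so all minors vanish and `x, y` are
dependent over `ℤ`.
-/

theorem mem_closure_range_iff_mem_range_linearCombination {ι G : Type*} [Fintype ι]
    [AddCommGroup G] (g : ι → G) (p : G) :
    p ∈ AddSubgroup.closure (Set.range g) ↔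
      p ∈ LinearMap.range (Fintype.linearCombination ℤ g) := by
  rw [Fintype.range_linearCombination, ← Submodule.span_int_eq_addSubgroupClosure]
  rfl

section Minor

variable {ι R : Type*} [CommRing R]

def minor (x y : ι → R) (i j : ι) : R := x i * y j - x j * y i

theorem not_linearIndependent_pair_of_minor_eq_zero [Nontrivial R] {x y : ι → R}
    (hxy : ∀ i j, minor x y i j = 0) : ¬ LinearIndependent R ![x, y] := by
  intro h
  obtain ⟨i, hi⟩ : ∃ i, x i ≠ 0 := Function.ne_iff.mp (h.ne_zero 0)
  refine hi (neg_eq_zero.mp (LinearIndependent.pair_iff.mp h (y i) (-x i) ?_).2)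
  ext j
  have hji := hxy j i
  rw [minor] at hji
  simp only [Pi.add_apply, Pi.smul_apply, smul_eq_mul, Pi.zero_apply]
  linear_combination hji

end Minor

def cross (u w : ℂ × ℂ) : ℂ := u.1 * w.2 - u.2 * w.1

theorem cross_eq_zero_of_eq_smul {v μ ν : ℂ × ℂ} {ζ ξ : ℂ} (hμ : μ = ζ • v) (hν : ν = ξ • v) :
    cross μ ν = 0 := by
  subst hμ hν
  simp only [cross, Prod.smul_fst, Prod.smul_snd, smul_eq_mul]
  ring

section Lattice

variable (r : ℝ)

noncomputable def latticeMap : (Fin 4 → ℤ) →ₗ[ℤ] ℂ × ℂ :=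
  Fintype.linearCombination ℤ ![(1, 0), (0, 1), (I * r ^ 3, r), (r, I)]

theorem mem_range_latticeMap_of_mem_closure {p : ℂ × ℂ}
    (hp : p ∈ AddSubgroup.closure {(1, 0), (0, 1), (I * (r : ℂ) ^ 3, (r : ℂ)), ((r : ℂ), I)}) :
    p ∈ LinearMap.range (latticeMap r) := by
  rw [latticeMap, ← mem_closure_range_iff_mem_range_linearCombination]
  simpa only [Matrix.range_cons, Matrix.range_empty, Set.union_empty, Set.singleton_union]
    using hp

theorem latticeMap_apply (x : Fin 4 → ℤ) :
    latticeMap r x = (x 0 + x 2 * (I * r ^ 3) + x 3 * r, x 1 + x 2 * r + x 3 * I) := by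
  ext <;> simp [latticeMap, Fintype.linearCombination_apply, Fin.sum_univ_four]

theorem cross_latticeMap_re (x y : Fin 4 → ℤ) :
    (cross (latticeMap r x) (latticeMap r y)).re =
      minor x y 0 1 + (minor x y 0 2 - minor x y 1 3 : ℝ) * r + minor x y 3 2 * r ^ 2
        + minor x y 3 2 * r ^ 3 := by
  simp [cross, minor, latticeMap_apply, ← ofReal_pow, ← ofReal_intCast]
  ring

theorem cross_latticeMap_im (x y : Fin 4 → ℤ) :
    (cross (latticeMap r x) (latticeMap r y)).im =
      minor x y 0 3 + minor x y 2 1 * r ^ 3 := by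
  simp [cross, minor, latticeMap_apply, ← ofReal_pow, ← ofReal_intCast]
  ring

end Lattice

theorem minor_eq_zero_of_cross_latticeMap_eq_zero {r : ℝ}
    (hind : ∀ q0 q1 q2 q3 : ℚ,
      (q0 : ℝ) + q1 * r + q2 * r ^ 2 + q3 * r ^ 3 = 0 →
      q0 = 0 ∧ q1 = 0 ∧ q2 = 0 ∧ q3 = 0)
    {x y : Fin 4 → ℤ} (h : cross (latticeMap r x) (latticeMap r y) = 0) :
    ∀ i j, minor x y i j = 0 := by
  have hind_int : ∀ a b c d : ℤ, (a : ℝ) + b * r + c * r ^ 2 + d * r ^ 3 = 0 →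
      a = 0 ∧ b = 0 ∧ c = 0 ∧ d = 0 := fun a b c d habcd => by
    exact_mod_cast hind a b c d (by exact_mod_cast habcd)
  obtain ⟨h01, h02_13, h32, -⟩ := hind_int (minor x y 0 1) (minor x y 0 2 - minor x y 1 3)
    (minor x y 3 2) (minor x y 3 2) (by push_cast; rw [← cross_latticeMap_re, h, zero_re])
  obtain ⟨h03, -, -, h21⟩ := hind_int (minor x y 0 3) 0 0 (minor x y 2 1)
    (by simpa [cross_latticeMap_im] using congrArg im h)
  have plucker : minor x y 0 1 * minor x y 2 3 - minor x y 0 2 * minor x y 1 3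
      + minor x y 0 3 * minor x y 1 2 = 0 := by
    simp only [minor]
    ring
  have h02 : minor x y 0 2 = 0 := pow_eq_zero_iff two_ne_zero |>.mp <| by
    linear_combination minor x y 0 2 * h02_13 - plucker + minor x y 2 3 * h01
      + minor x y 1 2 * h03
  intro i j
  simp only [minor] at h01 h02_13 h32 h03 h21 h02 ⊢
  fin_cases i <;> fin_cases j <;>
    simp only [Fin.zero_eta, Fin.mk_one, Fin.reduceFinMk, Fin.isValue] <;> linarith

theorem stmt_5_general (r : ℝ)
    (hind : ∀ q0 q1 q2 q3 : ℚ,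
      (q0 : ℝ) + q1 * r + q2 * r ^ 2 + q3 * r ^ 3 = 0 →
      q0 = 0 ∧ q1 = 0 ∧ q2 = 0 ∧ q3 = 0)
    (Λ : AddSubgroup (ℂ × ℂ))
    (hΛ : Λ = AddSubgroup.closure
      {((1 : ℂ), (0 : ℂ)), ((0 : ℂ), (1 : ℂ)),
       ((I * (r : ℂ) ^ 3, (r : ℂ))), (((r : ℂ), I))}) :
    ¬ ∃ (v : ℂ × ℂ), v ≠ 0 ∧ ∃ μ ν : ℂ × ℂ,
      μ ∈ Λ ∧ ν ∈ Λ ∧ (∃ ζ : ℂ, μ = ζ • v) ∧ (∃ ζ : ℂ, ν = ζ • v) ∧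
      (∀ m n : ℤ, m • μ + n • ν = 0 → m = 0 ∧ n = 0) := by
  rintro ⟨v, -, μ, ν, hμ, hν, ⟨ζ, hζ⟩, ⟨ξ, hξ⟩, hindep⟩
  subst hΛ
  obtain ⟨x, rfl⟩ := mem_range_latticeMap_of_mem_closure r hμ
  obtain ⟨y, rfl⟩ := mem_range_latticeMap_of_mem_closure r hν
  have hxy := minor_eq_zero_of_cross_latticeMap_eq_zero hind (cross_eq_zero_of_eq_smul hζ hξ)
  rw [← LinearIndependent.pair_iff] at hindep
  exact not_linearIndependent_pair_of_minor_eq_zero hxy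
    (LinearIndependent.of_comp (latticeMap r) (by rwa [← FinVec.map_eq]))

theorem stmt_5 (r : ℝ) (hr : 0 < r)
    (hind : ∀ q0 q1 q2 q3 : ℚ,
      (q0 : ℝ) + q1 * r + q2 * r ^ 2 + q3 * r ^ 3 = 0 →
      q0 = 0 ∧ q1 = 0 ∧ q2 = 0 ∧ q3 = 0)
    (Λ : AddSubgroup (ℂ × ℂ))
    (hΛ : Λ = AddSubgroup.closure
      {((1 : ℂ), (0 : ℂ)), ((0 : ℂ), (1 : ℂ)),
       ((I * (r : ℂ) ^ 3, (r : ℂ))), (((r : ℂ), I))}) :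
    ¬ ∃ (v : ℂ × ℂ), v ≠ 0 ∧ ∃ μ ν : ℂ × ℂ,
      μ ∈ Λ ∧ ν ∈ Λ ∧ (∃ ζ : ℂ, μ = ζ • v) ∧ (∃ ζ : ℂ, ν = ζ • v) ∧
      (∀ m n : ℤ, m • μ + n • ν = 0 → m = 0 ∧ n = 0) :=
  stmt_5_general r hind Λ hΛ
end

section
/- Let r₁ be a positive real with 1, r₁, r₁², r₁³ linearly independent over ℚ. The discrete subgroup Γ' of ℂ² generated by (1,0), (0,1), (i·r₁³, r₁) has rank 3, and ℂ²/Γ' is a toroidal group: there is no nonzero ℂ-linear map f : ℂ² → ℂ with f(Γ') ⊂ ℤ. -/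
open Complex

theorem stmt_8 (r1 : ℝ) (hr : 0 < r1)
    (hind : ∀ q0 q1 q2 q3 : ℚ,
      (q0 : ℝ) + q1 * r1 + q2 * r1 ^ 2 + q3 * r1 ^ 3 = 0 →
      q0 = 0 ∧ q1 = 0 ∧ q2 = 0 ∧ q3 = 0)
    (Γ' : AddSubgroup (ℂ × ℂ))
    (hΓ : Γ' = AddSubgroup.closure
      {((1 : ℂ), (0 : ℂ)), ((0 : ℂ), (1 : ℂ)),
       ((I * (r1 : ℂ) ^ 3, (r1 : ℂ)))}) :
    LinearIndependent ℝ
      ![((1 : ℂ), (0 : ℂ)), ((0 : ℂ), (1 : ℂ)),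
        ((I * (r1 : ℂ) ^ 3, (r1 : ℂ)))] ∧
    ¬ ∃ f : (ℂ × ℂ) →ₗ[ℂ] ℂ, f ≠ 0 ∧ ∀ x ∈ Γ', ∃ n : ℤ, f x = n := by
  constructor
  · rw [Fintype.linearIndependent_iff]
    intro g hg
    rw [Fin.sum_univ_three] at hg
    simp only [Matrix.cons_val_zero, Matrix.cons_val_one, Matrix.head_cons,
      Matrix.cons_val_two, Matrix.tail_cons] at hg
    have h1 := congrArg (fun p : ℂ × ℂ => p.1.im) hg
    have h2 := congrArg (fun p : ℂ × ℂ => p.1.re) hg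
    have h3 := congrArg (fun p : ℂ × ℂ => p.2.re) hg
    simp [Complex.mul_im, Complex.mul_re, ← Complex.ofReal_pow] at h1 h2 h3
    have hg2 : g 2 = 0 := by
      rcases h1 with h | h
      · exact h
      · exact absurd h hr.ne'
    have hg0 : g 0 = 0 := by simpa using h2
    have hg1 : g 1 = 0 := by
      rw [hg2] at h3; simpa using h3
    intro i; fin_cases i <;> assumption
  · rintro ⟨f, hf, hint⟩
    have hmem : ∀ v ∈ ({((1 : ℂ), (0 : ℂ)), ((0 : ℂ), (1 : ℂ)),
       ((I * (r1 : ℂ) ^ 3, (r1 : ℂ)))} : Set (ℂ × ℂ)), v ∈ Γ' := by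
      rw [hΓ]; intro v hv; exact AddSubgroup.subset_closure hv
    obtain ⟨n1, hn1⟩ := hint ((1 : ℂ), (0 : ℂ)) (hmem _ (by left; rfl))
    obtain ⟨n2, hn2⟩ := hint ((0 : ℂ), (1 : ℂ)) (hmem _ (by right; left; rfl))
    obtain ⟨n3, hn3⟩ := hint ((I * (r1 : ℂ) ^ 3, (r1 : ℂ)))
      (hmem _ (by right; right; rfl))
    have hdec : ((I * (r1 : ℂ) ^ 3, (r1 : ℂ)) : ℂ × ℂ)
        = (I * (r1:ℂ)^3) • ((1:ℂ), (0:ℂ)) + ((r1:ℂ)) • ((0:ℂ), (1:ℂ)) := by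
      simp [Prod.ext_iff]
    have key : I * (r1:ℂ)^3 * n1 + (r1:ℂ) * n2 = (n3:ℂ) := by
      rw [← hn3, hdec, map_add, map_smul, map_smul, hn1, hn2]
      simp [smul_eq_mul]
    have him := congrArg Complex.im key
    simp [Complex.add_im, Complex.mul_im, Complex.mul_re, ← Complex.ofReal_pow] at him
    have hn1z : n1 = 0 := by
      rcases him with h | h
      · exact absurd h hr.ne'
      · exact h
    have hre := congrArg Complex.re key
    simp [hn1z, Complex.add_re, Complex.mul_re, Complex.mul_im] at hre
    have hq := hind (-n3) n2 0 0 (by push_cast; linarith [hre])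
    have hn2z : n2 = 0 := by exact_mod_cast hq.2.1
    have hn1z' : (n1 : ℂ) = 0 := by exact_mod_cast hn1z
    have hn2z' : (n2 : ℂ) = 0 := by exact_mod_cast hn2z
    have hfz : f = 0 := by
      apply LinearMap.ext
      intro x
      have hx : x = x.1 • ((1:ℂ), (0:ℂ)) + x.2 • ((0:ℂ), (1:ℂ)) := by
        simp [Prod.ext_iff]
      have h5 : f x = f (x.1 • ((1:ℂ), (0:ℂ)) + x.2 • ((0:ℂ), (1:ℂ))) := by
        rw [← hx]
      rw [h5, map_add, map_smul, map_smul, hn1, hn2, hn1z', hn2z']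
      simp
    exact hf hfz
end

section
/- Let X = ℂⁿ/Γ be a toroidal group that is geometrically simple, i.e., X contains no closed toroidal subgroup other than {0} and X. Then every nonzero endomorphism φ of X has injective linear extension Φ : ℂⁿ → ℂⁿ; consequently End_ℚ(X) := End(X) ⊗ ℚ is a division algebra over ℚ. -/
open Pointwise

/-- The irrationality condition characterizing toroidal quotients:
`E/(E ∩ Γ)` is toroidal iff the only `ℂ`-linear functional on `E` sending
`E ∩ Γ` into `ℤ` is zero. -/
def IsToroidalSubspace {n : ℕ} (Γ : AddSubgroup (Fin n → ℂ))
    (E : Submodule ℂ (Fin n → ℂ)) : Prop :=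
  ∀ f : E →ₗ[ℂ] ℂ, (∀ x : E, (x : Fin n → ℂ) ∈ Γ → ∃ k : ℤ, f x = k) → f = 0

/-- A toroidal group `ℂⁿ/Γ` is geometrically simple if it contains no closed
toroidal subgroup other than `0` and itself. -/
def GeometricallySimple {n : ℕ} (Γ : AddSubgroup (Fin n → ℂ)) : Prop :=
  ∀ E : Submodule ℂ (Fin n → ℂ),
    IsClosed ((E : Set (Fin n → ℂ)) + (Γ : Set (Fin n → ℂ))) →
    IsToroidalSubspace Γ E → E = ⊥ ∨ E = ⊤

/-!
Since `Γ` spans `ℂⁿ` and is a finitely generated `ℤ`-module, the characteristic polynomial of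
`Φ|Γ` is a monic `p ∈ ℤ[X]` with `p(Φ) = 0`. Write `p = Xᵏ r` with `r(0) = N ≠ 0`. If `Φ` is not
a zero divisor among the endomorphisms preserving `Γ`, then `r(Φ) = 0`, and `Ψ = q(Φ)` with
`q = (N - r) / X` preserves `Γ` and satisfies `Ψ Φ = N`.

Suppose `Φ ψ = 0` with `ψ ≠ 0`. The range of `ψ` is a nonzero toroidal subspace of `ker Φ`; take
a maximal toroidal subspace `F` of `ker Φ` containing it. Let `V` be the largest real subspace of
the closed subgroup `closure (F + Γ)`, i.e. the Lie algebra of the identity component of the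
closure of the image of `F` in `X`. Near each of its points a closed subgroup of a real vector
space is a translate of its largest subspace, so `V` lies in the closure of `(F + Γ) ∩ V`. Hence
`F + span (Γ ∩ V)` is again toroidal and killed by `Φ`, and maximality gives `Γ ∩ V ⊆ F`, which
forces `V = F` and makes `F + Γ` closed. Geometric simplicity then gives `F = ℂⁿ`, i.e. `Φ = 0`.
-/

open Filter Topology Set Pointwise Polynomial

theorem eq_zero_of_forall_smul_mem_discrete {G : Type*} [TopologicalSpace G] [AddCommGroup G]
    [Module ℝ G] [ContinuousSMul ℝ G] {D : Set G} [DiscreteTopology D] {w : G}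
    (h : ∀ t : ℝ, t • w ∈ D) : w = 0 := by
  let c : ℝ → D := fun t => ⟨t • w, h t⟩
  have hc : c 1 = c 0 := PreconnectedSpace.constant inferInstance (by fun_prop)
  simpa [c] using congrArg Subtype.val hc

theorem add_inter_subset_add_inter {G : Type*} [AddGroup G] {V : AddSubgroup G} {W S : Set G}
    (hW : W ⊆ V) : (W + S) ∩ V ⊆ W + (S ∩ V) := by
  rintro _ ⟨⟨a, ha, s, hs, rfl⟩, hx⟩
  refine ⟨a, ha, s, ⟨hs, ?_⟩, rfl⟩
  simpa using V.add_mem (V.neg_mem (hW ha)) hx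

theorem LinearMap.injective_of_comp_eq_smul_id {K V W : Type*} [Field K] [AddCommGroup V]
    [Module K V] [AddCommGroup W] [Module K W] {f : V →ₗ[K] W} {g : W →ₗ[K] V} {c : K}
    (hc : c ≠ 0) (hgf : g ∘ₗ f = c • LinearMap.id) : Function.Injective f := by
  intro x y hxy
  have h := congrArg g hxy
  rw [← comp_apply, ← comp_apply, hgf] at h
  simpa [hc] using h

theorem exists_aeval_mul_eq_algebraMap {R A : Type*} [CommRing R] [Ring A] [Algebra R A] {x : A}
    (hx : IsLeftRegular x) {p : R[X]} (hp : p ≠ 0) (hpx : aeval x p = 0) :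
    ∃ q : R[X], ∃ N : R, N ≠ 0 ∧ aeval x q * x = algebraMap R A N := by
  obtain ⟨r, hpr, hr⟩ := p.exists_eq_pow_rootMultiplicity_mul_and_not_dvd hp 0
  rw [map_zero, sub_zero] at hpr hr
  have hrx : aeval x r = 0 := by
    rw [hpr, map_mul, map_pow, aeval_X] at hpx
    exact (hx.pow _).mul_left_eq_zero_iff.mp hpx
  -- Evaluate `r = divX r * X + C (r.coeff 0)` at `x`.
  refine ⟨-r.divX, r.coeff 0, fun h => hr (X_dvd_iff.mpr h), ?_⟩
  rw [← r.divX_mul_X_add, map_add, map_mul, aeval_X, aeval_C, add_eq_zero_iff_eq_neg] at hrx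
  rw [map_neg, neg_mul, hrx, neg_neg]

namespace AddSubgroup

section Lineality

variable {E : Type*} [AddCommGroup E] [Module ℝ E]

def linealitySpace (H : AddSubgroup E) : Submodule ℝ E where
  carrier := {x | ∀ t : ℝ, t • x ∈ H}
  zero_mem' _ := by simp
  add_mem' hx hy t := by simpa [smul_add] using H.add_mem (hx t) (hy t)
  smul_mem' r _ hx t := by simpa [smul_smul] using hx (t * r)

theorem mem_of_mem_linealitySpace {H : AddSubgroup E} {x : E} (hx : x ∈ H.linealitySpace) :
    x ∈ H := by
  simpa using hx 1

end Lineality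

section EndStabilizer

variable {R M : Type*} [Semiring R] [AddCommGroup M] [Module R M]

variable (R) in
def endStabilizer (Γ : AddSubgroup M) : Subalgebra ℤ (Module.End R M) where
  carrier := {f | ∀ γ ∈ Γ, f γ ∈ Γ}
  mul_mem' hf hg γ hγ := hf _ (hg γ hγ)
  add_mem' hf hg γ hγ := Γ.add_mem (hf γ hγ) (hg γ hγ)
  algebraMap_mem' k γ hγ := by simpa using Γ.zsmul_mem hγ k

def restrictEnd (Γ : AddSubgroup M) : Γ.endStabilizer R →ₐ[ℤ] Module.End ℤ Γ.toIntSubmodule where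
  toFun f := ((f : Module.End R M).restrictScalars ℤ).restrict f.2
  map_one' := rfl
  map_mul' _ _ := rfl
  map_zero' := rfl
  map_add' _ _ := rfl
  commutes' k := by ext; simp

variable {Γ : AddSubgroup M}

theorem restrictEnd_injective (hΓ : Submodule.span R (Γ : Set M) = ⊤) :
    Function.Injective (restrictEnd (R := R) Γ) := fun _ _ hfg =>
  Subtype.ext <| LinearMap.ext_on hΓ fun γ hγ =>
    congrArg Subtype.val (LinearMap.congr_fun hfg ⟨γ, hγ⟩)

theorem isIntegral_of_span_eq_top [Module.Finite ℤ Γ.toIntSubmodule]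
    (hΓ : Submodule.span R (Γ : Set M) = ⊤) (f : Γ.endStabilizer R) : IsIntegral ℤ f :=
  (isIntegral_algHom_iff _ (restrictEnd_injective hΓ)).mp (Algebra.IsIntegral.isIntegral _)

end EndStabilizer

end AddSubgroup

section ClosedSubgroup

variable {E : Type*} [NormedAddCommGroup E] [NormedSpace ℝ E] {H : AddSubgroup E}

theorem mem_linealitySpace_of_tendsto (hH : IsClosed (H : Set E)) {u : ℕ → E} {z : E}
    (hu : ∀ j, u j ∈ H) (hne : ∀ j, u j ≠ 0) (hu0 : Tendsto u atTop (𝓝 0))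
    (hdir : Tendsto (fun j => ‖u j‖⁻¹ • u j) atTop (𝓝 z)) : z ∈ H.linealitySpace := by
  intro t
  -- `round (t / ‖u j‖) • u j ∈ H` is within `‖u j‖ / 2` of `t • (‖u j‖⁻¹ • u j)`.
  set k : ℕ → ℤ := fun j => round (t / ‖u j‖)
  have hk : Tendsto (fun j => (k j : ℝ) * ‖u j‖) atTop (𝓝 t) := by
    have hsmall : Tendsto (fun j => ‖u j‖ / 2) atTop (𝓝 0) := by
      simpa using (tendsto_norm_zero.comp hu0).div_const 2
    refine tendsto_iff_norm_sub_tendsto_zero.mpr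
      (squeeze_zero (fun _ => norm_nonneg _) (fun j => ?_) hsmall)
    have hpos : 0 < ‖u j‖ := norm_pos_iff.mpr (hne j)
    calc ‖(k j : ℝ) * ‖u j‖ - t‖ = ‖u j‖ * |t / ‖u j‖ - k j| := by
          rw [Real.norm_eq_abs, ← abs_of_pos hpos, ← abs_mul, abs_sub_comm, abs_of_pos hpos]
          congr 1
          field_simp
      _ ≤ ‖u j‖ * (1 / 2) := by gcongr; exact abs_sub_round _
      _ = ‖u j‖ / 2 := by ring
  have hlim : Tendsto (fun j => (k j : ℝ) • u j) atTop (𝓝 (t • z)) := by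
    refine (hk.smul hdir).congr fun j => ?_
    rw [smul_smul, mul_assoc, mul_inv_cancel₀ (norm_ne_zero_iff.mpr (hne j)), mul_one]
  exact hH.mem_of_tendsto hlim (Eventually.of_forall fun j => by
    simpa [Int.cast_smul_eq_zsmul] using H.zsmul_mem (hu j) (k j))

variable [FiniteDimensional ℝ E]

theorem eventually_eq_zero_of_isCompl_linealitySpace (hH : IsClosed (H : Set E))
    {U : Submodule ℝ E} (hU : IsCompl H.linealitySpace U) :
    ∀ᶠ x in 𝓝 (0 : E), x ∈ H → x ∈ U → x = 0 := by
  by_contra hfreq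
  simp only [not_eventually, Classical.not_imp] at hfreq
  obtain ⟨u, hu0, hu⟩ := exists_seq_forall_of_frequently hfreq
  have hsphere : ∀ j, ‖u j‖⁻¹ • u j ∈ Metric.sphere (0 : E) 1 ∩ U := fun j =>
    ⟨by simp [norm_smul, (hu j).2.2], U.smul_mem _ (hu j).2.1⟩
  obtain ⟨z, ⟨hz1, hzU⟩, φ, hφ, hlim⟩ :=
    ((isCompact_sphere 0 1).inter_right (Submodule.closed_of_finiteDimensional U)).tendsto_subseq
      hsphere
  have hzV : z ∈ H.linealitySpace :=
    mem_linealitySpace_of_tendsto hH (fun j => (hu (φ j)).1) (fun j => (hu (φ j)).2.2)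
      (hu0.comp hφ.tendsto_atTop) hlim
  have hz0 : z = 0 := Submodule.disjoint_def.mp hU.disjoint z hzV hzU
  simp [hz0] at hz1

theorem eventually_sub_mem_linealitySpace (hH : IsClosed (H : Set E)) {y : E} (hy : y ∈ H) :
    ∀ᶠ x in 𝓝 y, x ∈ H → x - y ∈ H.linealitySpace := by
  obtain ⟨U, hU⟩ := H.linealitySpace.exists_isCompl
  set P := U.projection H.linealitySpace hU.symm
  have hPH : ∀ x ∈ H, P x ∈ H := fun x hx => by
    rw [Submodule.projection_eq_self_sub_projection hU]
    exact H.sub_mem hx (AddSubgroup.mem_of_mem_linealitySpace (Submodule.projection_apply_mem _ _))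
  have hP : Tendsto (fun x => P (x - y)) (𝓝 y) (𝓝 0) := by
    simpa [Function.comp_def] using
      (P.continuous_of_finiteDimensional.comp (continuous_sub_right y)).tendsto y
  filter_upwards [hP.eventually (eventually_eq_zero_of_isCompl_linealitySpace hH hU)]
    with x hx hxH
  exact (Submodule.projection_apply_eq_zero_iff _).mp
    (hx (hPH _ (H.sub_mem hxH hy)) (Submodule.projection_apply_mem _ _))

theorem linealitySpace_subset_closure_inter {S : Set E} (hHS : (H : Set E) = closure S) :
    (H.linealitySpace : Set E) ⊆ closure (S ∩ H.linealitySpace) := by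
  intro v hv
  have hvH : v ∈ H := AddSubgroup.mem_of_mem_linealitySpace hv
  have hnear := eventually_sub_mem_linealitySpace (hHS ▸ isClosed_closure) hvH
  have hvS : v ∈ closure S := hHS ▸ hvH
  refine mem_closure_iff_frequently.mpr
    (((mem_closure_iff_frequently.mp hvS).and_eventually hnear).mono ?_)
  rintro x ⟨hxS, hx⟩
  have hxH : x ∈ H := (hHS.symm ▸ subset_closure hxS : x ∈ (H : Set E))
  exact ⟨hxS, by simpa using H.linealitySpace.add_mem (hx hxH) hv⟩

theorem isClosed_add_of_linealitySpace_subset {W : AddSubgroup E} {S : Set E}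
    (hHS : (H : Set E) = closure ((W : Set E) + S)) (hW : (H.linealitySpace : Set E) ⊆ W) :
    IsClosed ((W : Set E) + S) := by
  refine isClosed_of_closure_subset fun h hh => ?_
  have hnear := eventually_sub_mem_linealitySpace (hHS ▸ isClosed_closure)
    (hHS.symm ▸ hh : h ∈ (H : Set E))
  obtain ⟨_, ⟨a, ha, s, hs, rfl⟩, hx⟩ :=
    ((mem_closure_iff_frequently.mp hh).and_eventually hnear).exists
  have hxH : a + s ∈ H := (hHS.symm ▸ subset_closure ⟨a, ha, s, hs, rfl⟩ : a + s ∈ (H : Set E))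
  exact ⟨a - (a + s - h), W.sub_mem ha (hW (hx hxH)), s, hs, by abel_nf⟩

end ClosedSubgroup

section Toroidal

variable {n : ℕ} {Γ : AddSubgroup (Fin n → ℂ)}

theorem isToroidalSubspace_iff {E : Submodule ℂ (Fin n → ℂ)} :
    IsToroidalSubspace Γ E ↔ ∀ g : (Fin n → ℂ) →ₗ[ℂ] ℂ,
      (∀ γ ∈ Γ, γ ∈ E → ∃ k : ℤ, g γ = k) → E ≤ LinearMap.ker g := by
  constructor
  · intro hE g hg x hx
    simpa using LinearMap.congr_fun (hE (g ∘ₗ E.subtype) fun y hy => hg y hy y.2) ⟨x, hx⟩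
  · intro h f hf
    obtain ⟨g, rfl⟩ := f.exists_extend
    ext x
    simpa using h g (fun γ hγ hγE => hf ⟨γ, hγE⟩ hγ) x.2

theorem eq_zero_of_isToroidalSubspace_top (htor : IsToroidalSubspace Γ ⊤)
    {g : (Fin n → ℂ) →ₗ[ℂ] ℂ} (hg : ∀ γ ∈ Γ, ∃ k : ℤ, g γ = k) : g = 0 :=
  LinearMap.ker_eq_top.mp <| top_le_iff.mp <|
    isToroidalSubspace_iff.mp htor g fun γ hγ _ => hg γ hγ

theorem span_eq_top_of_isToroidalSubspace_top (htor : IsToroidalSubspace Γ ⊤) :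
    Submodule.span ℂ (Γ : Set (Fin n → ℂ)) = ⊤ := by
  by_contra h
  obtain ⟨g, hg0, hle⟩ := Submodule.exists_le_ker_of_lt_top _ (lt_top_iff_ne_top.mpr h)
  exact hg0 <| eq_zero_of_isToroidalSubspace_top htor fun γ hγ =>
    ⟨0, by simpa using hle (Submodule.subset_span hγ)⟩

theorem isToroidalSubspace_range (htor : IsToroidalSubspace Γ ⊤)
    {ψ : (Fin n → ℂ) →ₗ[ℂ] (Fin n → ℂ)} (hψ : ∀ γ ∈ Γ, ψ γ ∈ Γ) :
    IsToroidalSubspace Γ (LinearMap.range ψ) := by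
  refine isToroidalSubspace_iff.mpr fun g hg => ?_
  rintro _ ⟨x, rfl⟩
  have hgψ : g ∘ₗ ψ = 0 :=
    eq_zero_of_isToroidalSubspace_top htor fun γ hγ => hg _ (hψ γ hγ) ⟨γ, rfl⟩
  simpa using LinearMap.congr_fun hgψ x

variable (Γ) in
noncomputable def sumClosure (F : Submodule ℂ (Fin n → ℂ)) : AddSubgroup (Fin n → ℂ) :=
  (F.toAddSubgroup ⊔ Γ).topologicalClosure

variable {F : Submodule ℂ (Fin n → ℂ)}

theorem coe_sumClosure :
    (sumClosure Γ F : Set (Fin n → ℂ)) =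
      closure ((F : Set (Fin n → ℂ)) + (Γ : Set (Fin n → ℂ))) := by
  rw [sumClosure, AddSubgroup.topologicalClosure_coe, AddSubgroup.add_normal]
  rfl

theorem subset_linealitySpace_sumClosure :
    (F : Set (Fin n → ℂ)) ⊆ (sumClosure Γ F).linealitySpace := by
  intro x hx t
  rw [← SetLike.mem_coe, coe_sumClosure]
  exact subset_closure ⟨_, F.smul_of_tower_mem t hx, 0, Γ.zero_mem, add_zero _⟩

theorem linealitySpace_sumClosure_subset_ker [DiscreteTopology Γ]
    {Θ : (Fin n → ℂ) →ₗ[ℂ] (Fin n → ℂ)} (hΘ : ∀ γ ∈ Γ, Θ γ ∈ Γ) (hF : F ≤ LinearMap.ker Θ) :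
    ((sumClosure Γ F).linealitySpace : Set (Fin n → ℂ)) ⊆ LinearMap.ker Θ := by
  have hmaps : MapsTo Θ (closure ((F : Set (Fin n → ℂ)) + (Γ : Set (Fin n → ℂ)))) Γ := by
    have : MapsTo Θ ((F : Set (Fin n → ℂ)) + (Γ : Set (Fin n → ℂ))) Γ := by
      rintro _ ⟨a, ha, γ, hγ, rfl⟩
      simpa [LinearMap.mem_ker.mp (hF ha)] using hΘ γ hγ
    simpa [AddSubgroup.isClosed_of_discrete.closure_eq] using
      this.closure Θ.continuous_of_finiteDimensional
  intro x hx
  refine eq_zero_of_forall_smul_mem_discrete (D := (Γ : Set (Fin n → ℂ))) fun t => ?_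
  rw [← LinearMap.map_smul_of_tower]
  exact hmaps (coe_sumClosure ▸ hx t)

theorem linealitySpace_sumClosure_subset
    (h : (Γ : Set (Fin n → ℂ)) ∩ (sumClosure Γ F).linealitySpace ⊆ F) :
    ((sumClosure Γ F).linealitySpace : Set (Fin n → ℂ)) ⊆ F := by
  refine (linealitySpace_subset_closure_inter coe_sumClosure).trans
    (closure_minimal (fun x hx => ?_) (Submodule.closed_of_finiteDimensional F))
  obtain ⟨a, ha, γ, hγ, rfl⟩ := add_inter_subset_add_inter
    (V := (sumClosure Γ F).linealitySpace.toAddSubgroup) subset_linealitySpace_sumClosure hx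
  exact F.add_mem ha (h hγ)

theorem IsToroidalSubspace.sup_span_inter_linealitySpace (hF : IsToroidalSubspace Γ F) :
    IsToroidalSubspace Γ (F ⊔ Submodule.span ℂ
      ((Γ : Set (Fin n → ℂ)) ∩ (sumClosure Γ F).linealitySpace)) := by
  set V := (sumClosure Γ F).linealitySpace
  rw [isToroidalSubspace_iff] at hF ⊢
  intro g hg
  have hgF : F ≤ LinearMap.ker g := hF g fun γ hγ hγF => hg γ hγ (Submodule.mem_sup_left hγF)
  have hint : MapsTo g (closure (((F : Set (Fin n → ℂ)) + (Γ : Set (Fin n → ℂ))) ∩ V))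
      (range ((↑) : ℤ → ℂ)) := by
    have : MapsTo g (((F : Set (Fin n → ℂ)) + (Γ : Set (Fin n → ℂ))) ∩ V)
        (range ((↑) : ℤ → ℂ)) := by
      intro x hx
      obtain ⟨a, ha, γ, hγ, rfl⟩ :=
        add_inter_subset_add_inter (V := V.toAddSubgroup) subset_linealitySpace_sumClosure hx
      obtain ⟨k, hk⟩ := hg γ hγ.1 (Submodule.mem_sup_right (Submodule.subset_span hγ))
      exact ⟨k, by simp [LinearMap.mem_ker.mp (hgF ha), hk]⟩
    simpa [Complex.isClosed_range_intCast.closure_eq] using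
      this.closure g.continuous_of_finiteDimensional
  have : DiscreteTopology (range ((↑) : ℤ → ℂ)) :=
    Complex.isClosedEmbedding_intCast.isEmbedding.toHomeomorph.discreteTopology
  have hgV : (V : Set (Fin n → ℂ)) ⊆ LinearMap.ker g := fun v hv =>
    eq_zero_of_forall_smul_mem_discrete fun t => by
      rw [← LinearMap.map_smul_of_tower]
      exact hint (linealitySpace_subset_closure_inter coe_sumClosure (V.smul_mem t hv))
  exact sup_le hgF (Submodule.span_le.mpr fun x hx => hgV hx.2)

theorem GeometricallySimple.eq_zero_of_isToroidalSubspace_le_ker [DiscreteTopology Γ]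
    (hsimple : GeometricallySimple Γ) {Θ : (Fin n → ℂ) →ₗ[ℂ] (Fin n → ℂ)}
    (hΘ : ∀ γ ∈ Γ, Θ γ ∈ Γ) {S : Submodule ℂ (Fin n → ℂ)} (hS : S ≠ ⊥)
    (hStor : IsToroidalSubspace Γ S) (hSΘ : S ≤ LinearMap.ker Θ) : Θ = 0 := by
  obtain ⟨F, ⟨hSF, hFtor, hFΘ⟩, hmax⟩ := set_has_maximal_iff_noetherian.mpr inferInstance
    {F | S ≤ F ∧ IsToroidalSubspace Γ F ∧ F ≤ LinearMap.ker Θ} ⟨S, le_rfl, hStor, hSΘ⟩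
  set V := (sumClosure Γ F).linealitySpace
  -- By maximality, adding the lattice points of `V` does not enlarge `F`.
  have hspan : Submodule.span ℂ ((Γ : Set (Fin n → ℂ)) ∩ V) ≤ F := by
    have hVΘ := linealitySpace_sumClosure_subset_ker hΘ hFΘ
    refine sup_eq_left.mp ((le_sup_left.lt_or_eq.resolve_left (hmax _
      ⟨hSF.trans le_sup_left, hFtor.sup_span_inter_linealitySpace,
        sup_le hFΘ (Submodule.span_le.mpr fun x hx => hVΘ hx.2)⟩)).symm)
  have hclosed : IsClosed ((F : Set (Fin n → ℂ)) + (Γ : Set (Fin n → ℂ))) :=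
    isClosed_add_of_linealitySpace_subset (W := F.toAddSubgroup) coe_sumClosure
      (linealitySpace_sumClosure_subset fun x hx => hspan (Submodule.subset_span hx))
  rcases hsimple F hclosed hFtor with rfl | rfl
  · exact absurd (le_bot_iff.mp hSF) hS
  · exact LinearMap.ker_eq_top.mp (top_le_iff.mp hFΘ)

theorem GeometricallySimple.isLeftRegular [DiscreteTopology Γ] (hsimple : GeometricallySimple Γ)
    (htor : IsToroidalSubspace Γ ⊤) {φ : Γ.endStabilizer ℂ} (hφ : φ ≠ 0) : IsLeftRegular φ := by
  refine isLeftRegular_of_non_zero_divisor φ fun ψ hφψ => ?_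
  by_contra hψ
  refine hφ <| Subtype.ext <| hsimple.eq_zero_of_isToroidalSubspace_le_ker φ.2
    (S := LinearMap.range (ψ : Module.End ℂ (Fin n → ℂ))) ?_ (isToroidalSubspace_range htor ψ.2) ?_
  · exact fun h => hψ (Subtype.ext (LinearMap.range_eq_bot.mp h))
  · rintro _ ⟨x, rfl⟩
    exact LinearMap.congr_fun (congrArg Subtype.val hφψ) x

end Toroidal

theorem stmt_14 (n : ℕ) (Γ : AddSubgroup (Fin n → ℂ)) [DiscreteTopology Γ]
    (htor : IsToroidalSubspace Γ (⊤ : Submodule ℂ (Fin n → ℂ)))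
    (hsimple : GeometricallySimple Γ)
    (Φ : (Fin n → ℂ) →ₗ[ℂ] (Fin n → ℂ))
    (hΦΓ : ∀ γ ∈ Γ, Φ γ ∈ Γ) (hΦ : Φ ≠ 0) :
    Function.Injective Φ ∧
    ∃ Ψ : (Fin n → ℂ) →ₗ[ℂ] (Fin n → ℂ),
      (∀ γ ∈ Γ, Ψ γ ∈ Γ) ∧ ∃ N : ℤ, N ≠ 0 ∧ Ψ ∘ₗ Φ = (N : ℂ) • LinearMap.id := by
  have : DiscreteTopology Γ.toIntSubmodule := ‹DiscreteTopology Γ›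
  let φ : Γ.endStabilizer ℂ := ⟨Φ, hΦΓ⟩
  have hφ : φ ≠ 0 := fun h => hΦ (congrArg Subtype.val h)
  obtain ⟨p, hp, hpφ⟩ :=
    AddSubgroup.isIntegral_of_span_eq_top (span_eq_top_of_isToroidalSubspace_top htor) φ
  obtain ⟨q, N, hN, hqN⟩ :=
    exists_aeval_mul_eq_algebraMap (hsimple.isLeftRegular htor hφ) hp.ne_zero hpφ
  set Ψ := aeval φ q
  have hΨΦ : (Ψ : Module.End ℂ (Fin n → ℂ)) ∘ₗ Φ = (N : ℂ) • LinearMap.id := by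
    refine LinearMap.ext fun x => ?_
    simpa [Algebra.algebraMap_eq_smul_one, ← Int.cast_smul_eq_zsmul ℂ] using
      LinearMap.congr_fun (congrArg Subtype.val hqN) x
  exact ⟨LinearMap.injective_of_comp_eq_smul_id (Int.cast_ne_zero.mpr hN) hΨΦ,
    Ψ, Ψ.2, N, hN, hΨΦ⟩
end

section
/- Let r be a positive real number such that 1, r, r², r³ are linearly independent over ℚ, and let Λ ⊂ ℂ² be the lattice generated by (1,0), (0,1), (i·r³, r), (r, i). Suppose λ, λ' ∈ Λ \ {0} with λ = ζ·λ' for some ζ ∈ ℂ. Writing λ = a₁(1,0)+a₂(0,1)+a₃(i r³, r)+a₄(r,i) and λ' = b₁(1,0)+b₂(0,1)+b₃(i r³, r)+b₄(r,i) with integer coefficients, in the case b₃ ≠ 0 and b₄ = 0 one has a₄ = 0 and the proportionality relations a₁b₂ = b₁a₂, a₁b₃ = b₁a₃, a₂b₃ = b₂a₃ hold. -/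
open Complex

theorem stmt_16 (r : ℝ) (hr : 0 < r)
    (hind : ∀ q0 q1 q2 q3 : ℚ,
      (q0 : ℝ) + q1 * r + q2 * r ^ 2 + q3 * r ^ 3 = 0 →
      q0 = 0 ∧ q1 = 0 ∧ q2 = 0 ∧ q3 = 0)
    (a1 a2 a3 a4 b1 b2 b3 b4 : ℤ) (ζ : ℂ)
    (lam lam' : ℂ × ℂ)
    (hlam : lam = a1 • ((1 : ℂ), (0 : ℂ)) + a2 • ((0 : ℂ), (1 : ℂ)) +
      a3 • ((I * (r : ℂ) ^ 3, (r : ℂ))) + a4 • (((r : ℂ), I)))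
    (hlam' : lam' = b1 • ((1 : ℂ), (0 : ℂ)) + b2 • ((0 : ℂ), (1 : ℂ)) +
      b3 • ((I * (r : ℂ) ^ 3, (r : ℂ))) + b4 • (((r : ℂ), I)))
    (hne : lam ≠ 0) (hne' : lam' ≠ 0)
    (hζ : lam = ζ • lam')
    (hb3 : b3 ≠ 0) (hb4 : b4 = 0) :
    a4 = 0 ∧ a1 * b2 = b1 * a2 ∧ a1 * b3 = b1 * a3 ∧ a2 * b3 = b2 * a3 := by
  have h1 : lam.1 = ζ * lam'.1 := by rw [hζ]; rfl
  have h2 : lam.2 = ζ * lam'.2 := by rw [hζ]; rfl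
  have key : lam.1 * lam'.2 = lam.2 * lam'.1 := by rw [h1, h2]; ring
  rw [hlam, hlam', hb4] at key
  simp only [Prod.fst_add, Prod.snd_add, Prod.smul_fst, Prod.smul_snd] at key
  simp only [zsmul_eq_mul] at key
  have hre := congrArg Complex.re key
  have him := congrArg Complex.im key
  simp only [mul_re, mul_im, add_re, add_im, mul_one, mul_zero, one_re, one_im, zero_re,
    zero_im, I_re, I_im, intCast_re, intCast_im, ofReal_re, ofReal_im, pow_succ, pow_zero,
    one_mul] at hre him
  ring_nf at hre him
  have H1 := hind (a1*b2 - a2*b1) (a1*b3 + a4*b2 - a3*b1) (a4*b3) (a4*b3) (by push_cast; linarith [hre])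
  have H2 := hind (-(a4*b1)) 0 0 (a3*b2 - a2*b3) (by push_cast; linarith [him])
  obtain ⟨e1, e2, e3, -⟩ := H1
  obtain ⟨e4, -, -, e5⟩ := H2
  have i1 : a1 * b2 - a2 * b1 = 0 := by exact_mod_cast e1
  have i2 : a1 * b3 + a4 * b2 - a3 * b1 = 0 := by exact_mod_cast e2
  have i3 : a4 * b3 = 0 := by exact_mod_cast e3
  have i5 : a3 * b2 - a2 * b3 = 0 := by exact_mod_cast e5
  have ha4 : a4 = 0 := by
    rcases mul_eq_zero.mp i3 with h | h
    · exact h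
    · exact absurd h hb3
  refine ⟨ha4, by linarith, ?_, by linarith⟩
  subst ha4
  linarith
end
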